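/- Let U be a real-valued random variable, let C > 0 be a constant, and let K_r and K* be probability density functions supported on [0,1] that are nonincreasing on [0,1]. Define K_r**(w) = K_r(w) · K*( [∫₀¹ K_r(v) P(v + w < C·U < v + 1) dv] / [∫₀¹ K_r(v) P(v < C·U < v + 1) dv] ) for w ∈ [0,1], and assume ∫₀¹ K_r(v) P(v < C·U < v + 1) dv > 0, ∫₀¹ K_r**(w) dw > 0, and ∫₀¹ K_r(w) dw > 0. Then [∫₀¹ K_r**(w) P(|U| > w/C) dw] / [∫₀¹ K_r**(w) dw] ≤ [∫₀¹ K_r(w) P(|U| > w/C) dw] / [∫₀¹ K_r(w) dw]. -/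

import Mathlib

open MeasureTheory ProbabilityTheory Set

lemma chebyshev_integral_aux (s : Set ℝ) (hs : MeasurableSet s) (K f h : ℝ → ℝ)
    (hK : IntegrableOn K s)
    (hKf : IntegrableOn (fun x => K x * f x) s)
    (hKh : IntegrableOn (fun x => K x * h x) s)
    (hKhf : IntegrableOn (fun x => K x * h x * f x) s)
    (hKnn : ∀ x, 0 ≤ K x)
    (hsign : ∀ x ∈ s, ∀ y ∈ s, (f x - f y) * (h x - h y) ≤ 0) :
    (∫ x in s, K x * h x * f x) * ∫ x in s, K x ≤
      (∫ x in s, K x * f x) * ∫ x in s, K x * h x := by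
  have hG : ∫ p : ℝ × ℝ, K p.1 * K p.2 * ((f p.1 - f p.2) * (h p.1 - h p.2)) ∂((volume.restrict s).prod (volume.restrict s))
      ≤ 0 := by
    apply integral_nonpos_of_ae
    have : (volume.restrict s).prod (volume.restrict s) = (volume.prod volume).restrict (s ×ˢ s) := by
      rw [Measure.prod_restrict]
    rw [this]
    filter_upwards [ae_restrict_mem (hs.prod hs)] with p hp
    exact mul_nonpos_of_nonneg_of_nonpos (mul_nonneg (hKnn _) (hKnn _))
      (hsign _ hp.1 _ hp.2)
  have hexp : ∫ p : ℝ × ℝ, K p.1 * K p.2 * ((f p.1 - f p.2) * (h p.1 - h p.2)) ∂((volume.restrict s).prod (volume.restrict s))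
      = 2 * ((∫ x in s, K x * h x * f x) * (∫ x in s, K x)
          - (∫ x in s, K x * f x) * (∫ x in s, K x * h x)) := by
    have key : ∀ p : ℝ × ℝ, K p.1 * K p.2 * ((f p.1 - f p.2) * (h p.1 - h p.2))
        = (K p.1 * h p.1 * f p.1) * K p.2 - (K p.1 * f p.1) * (K p.2 * h p.2)
          - (K p.1 * h p.1) * (K p.2 * f p.2) + K p.1 * (K p.2 * h p.2 * f p.2) := by
      intro p; ring
    rw [MeasureTheory.integral_congr_ae (Filter.Eventually.of_forall key)]
    have e1 := MeasureTheory.integral_prod_mul (μ := volume.restrict s) (ν := volume.restrict s)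
      (fun x => K x * h x * f x) K
    have e2 := MeasureTheory.integral_prod_mul (μ := volume.restrict s) (ν := volume.restrict s)
      (fun x => K x * f x) (fun x => K x * h x)
    have e3 := MeasureTheory.integral_prod_mul (μ := volume.restrict s) (ν := volume.restrict s)
      (fun x => K x * h x) (fun x => K x * f x)
    have e4 := MeasureTheory.integral_prod_mul (μ := volume.restrict s) (ν := volume.restrict s)
      K (fun x => K x * h x * f x)
    rw [integral_add, integral_sub, integral_sub, e1, e2, e3, e4]
    · ring
    · exact hKhf.mul_prod hK
    · exact hKf.mul_prod hKh
    · exact (hKhf.mul_prod hK).sub (hKf.mul_prod hKh)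
    · exact hKh.mul_prod hKf
    · exact ((hKhf.mul_prod hK).sub (hKf.mul_prod hKh)).sub (hKh.mul_prod hKf)
    · exact hK.mul_prod hKhf
  rw [hexp] at hG; linarith

/-- Let `U` be a real-valued random variable, `C > 0` a constant, and let
`K_r` and `K*` be probability density functions supported on `[0,1]` that are nonincreasing on
`[0,1]`. Define
`K_r**(w) = K_r(w) · K*((∫₀¹ K_r(v) P(v + w < C·U < v + 1) dv) / (∫₀¹ K_r(v) P(v < C·U < v + 1) dv))`
for `w ∈ [0,1]`, and assume `∫₀¹ K_r(v) P(v < C·U < v + 1) dv > 0`, `∫₀¹ K_r**(w) dw > 0`, and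
`∫₀¹ K_r(w) dw > 0`. Then
`(∫₀¹ K_r**(w) P(|U| > w/C) dw) / (∫₀¹ K_r**(w) dw)
  ≤ (∫₀¹ K_r(w) P(|U| > w/C) dw) / (∫₀¹ K_r(w) dw)`. -/
theorem modified_kernel_bias_le {Ω : Type*} [MeasureSpace Ω]
    [IsProbabilityMeasure (ℙ : Measure Ω)] (U : Ω → ℝ) (hU : Measurable U)
    (C : ℝ) (hC : 0 < C)
    (Kr Ks : ℝ → ℝ) (hKrmeas : Measurable Kr) (hKsmeas : Measurable Ks)
    (hKrnn : ∀ x, 0 ≤ Kr x) (hKsnn : ∀ x, 0 ≤ Ks x)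
    (hKrsupp : ∀ x ∉ Icc (0 : ℝ) 1, Kr x = 0) (hKssupp : ∀ x ∉ Icc (0 : ℝ) 1, Ks x = 0)
    (hKrpdf : ∫ x, Kr x = 1) (hKspdf : ∫ x, Ks x = 1)
    (hKrdec : AntitoneOn Kr (Icc 0 1)) (hKsdec : AntitoneOn Ks (Icc 0 1))
    (Krss : ℝ → ℝ)
    (hKrss : ∀ w, Krss w = Kr w *
      Ks ((∫ v in (0 : ℝ)..1, Kr v * (ℙ {ω | v + w < C * U ω ∧ C * U ω < v + 1}).toReal) /
        ∫ v in (0 : ℝ)..1, Kr v * (ℙ {ω | v < C * U ω ∧ C * U ω < v + 1}).toReal))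
    (hden : 0 < ∫ v in (0 : ℝ)..1, Kr v * (ℙ {ω | v < C * U ω ∧ C * U ω < v + 1}).toReal)
    (hKrsspos : 0 < ∫ w in (0 : ℝ)..1, Krss w)
    (hKrpos : 0 < ∫ w in (0 : ℝ)..1, Kr w) :
    (∫ w in (0 : ℝ)..1, Krss w * (ℙ {ω | w / C < |U ω|}).toReal) /
        (∫ w in (0 : ℝ)..1, Krss w) ≤
      (∫ w in (0 : ℝ)..1, Kr w * (ℙ {ω | w / C < |U ω|}).toReal) /
        ∫ w in (0 : ℝ)..1, Kr w := by
  have h01 : (0:ℝ) ≤ 1 := zero_le_one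
  set D := ∫ v in (0 : ℝ)..1, Kr v * (ℙ {ω | v < C * U ω ∧ C * U ω < v + 1}).toReal with hDdef
  -- the function f
  set f : ℝ → ℝ := fun w => (ℙ {ω | w / C < |U ω|}).toReal with hfdef
  have hf0 : ∀ w, 0 ≤ f w := fun w => ENNReal.toReal_nonneg
  have htR1 : ∀ s : Set Ω, (ℙ s).toReal ≤ 1 := fun s => by
    simpa using ENNReal.toReal_mono ENNReal.one_ne_top (prob_le_one (μ := (ℙ : Measure Ω)) (s := s))
  have hf1 : ∀ w, f w ≤ 1 := fun w => htR1 _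
  have hfanti : Antitone f := by
    intro a b hab
    refine ENNReal.toReal_mono (measure_ne_top _ _) (measure_mono ?_)
    intro ω hω
    have : a / C ≤ b / C := by gcongr
    exact lt_of_le_of_lt this hω
  -- measurability of slice probabilities
  have hmeasP : ∀ w : ℝ, Measurable fun v : ℝ =>
      (ℙ {ω | v + w < C * U ω ∧ C * U ω < v + 1}).toReal := by
    intro w
    have hS : MeasurableSet {p : ℝ × Ω | p.1 + w < C * U p.2 ∧ C * U p.2 < p.1 + 1} := by
      exact (measurableSet_lt (measurable_fst.add_const w)
          (measurable_const.mul (hU.comp measurable_snd))).inter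
        (measurableSet_lt (measurable_const.mul (hU.comp measurable_snd))
          (measurable_fst.add_const 1))
    exact (measurable_measure_prodMk_left (ν := (ℙ : Measure Ω)) hS).ennreal_toReal
  have hmeasP0 : Measurable fun v : ℝ =>
      (ℙ {ω | v < C * U ω ∧ C * U ω < v + 1}).toReal := by
    have hS : MeasurableSet {p : ℝ × Ω | p.1 < C * U p.2 ∧ C * U p.2 < p.1 + 1} := by
      exact (measurableSet_lt measurable_fst
          (measurable_const.mul (hU.comp measurable_snd))).inter
        (measurableSet_lt (measurable_const.mul (hU.comp measurable_snd))
          (measurable_fst.add_const 1))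
    exact (measurable_measure_prodMk_left (ν := (ℙ : Measure Ω)) hS).ennreal_toReal
  -- integrability of Kr and Krss on Ioc 0 1
  have hKrInt : IntegrableOn Kr (Ioc 0 1) := by
    by_contra hcon
    rw [intervalIntegral.integral_undef (fun hI => hcon
      ((intervalIntegrable_iff_integrableOn_Ioc_of_le h01).mp hI))] at hKrpos
    exact lt_irrefl 0 hKrpos
  have hKrssInt : IntegrableOn Krss (Ioc 0 1) := by
    by_contra hcon
    rw [intervalIntegral.integral_undef (fun hI => hcon
      ((intervalIntegrable_iff_integrableOn_Ioc_of_le h01).mp hI))] at hKrsspos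
    exact lt_irrefl 0 hKrsspos
  -- domination helper
  have hdom : ∀ (φ : ℝ → ℝ), Measurable φ → (∀ v, 0 ≤ φ v) → (∀ v, φ v ≤ 1) →
      IntegrableOn (fun v => Kr v * φ v) (Ioc 0 1) := by
    intro φ hφm hφ0 hφ1
    refine Integrable.mono hKrInt ((hKrmeas.mul hφm).aestronglyMeasurable) ?_
    refine Filter.Eventually.of_forall (fun v => ?_)
    rw [Real.norm_eq_abs, Real.norm_eq_abs, abs_of_nonneg (mul_nonneg (hKrnn v) (hφ0 v)),
      abs_of_nonneg (hKrnn v)]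
    exact mul_le_of_le_one_right (hKrnn v) (hφ1 v)
  have hPbd : ∀ (w v : ℝ), (ℙ {ω | v + w < C * U ω ∧ C * U ω < v + 1}).toReal ≤ 1 := by
    intro w v
    exact htR1 _
  have hPInt : ∀ w : ℝ, IntervalIntegrable
      (fun v => Kr v * (ℙ {ω | v + w < C * U ω ∧ C * U ω < v + 1}).toReal) volume 0 1 := by
    intro w
    exact (intervalIntegrable_iff_integrableOn_Ioc_of_le h01).mpr
      (hdom _ (hmeasP w) (fun v => ENNReal.toReal_nonneg) (hPbd w))
  -- numerator function N
  set N : ℝ → ℝ := fun w =>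
    ∫ v in (0 : ℝ)..1, Kr v * (ℙ {ω | v + w < C * U ω ∧ C * U ω < v + 1}).toReal with hNdef
  have hNanti : Antitone N := by
    intro a b hab
    refine intervalIntegral.integral_mono_on h01 (hPInt b) (hPInt a) (fun v _ => ?_)
    refine mul_le_mul_of_nonneg_left (ENNReal.toReal_mono (measure_ne_top _ _)
      (measure_mono ?_)) (hKrnn v)
    intro ω hω
    exact ⟨lt_of_le_of_lt (by linarith) hω.1, hω.2⟩
  have hNnn : ∀ w, 0 ≤ N w := by
    intro w
    exact intervalIntegral.integral_nonneg h01
      (fun v _ => mul_nonneg (hKrnn v) ENNReal.toReal_nonneg)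
  have hNleD : ∀ w : ℝ, 0 ≤ w → N w ≤ D := by
    intro w hw
    rw [hDdef]
    refine intervalIntegral.integral_mono_on h01 (hPInt w)
      ((intervalIntegrable_iff_integrableOn_Ioc_of_le h01).mpr
        (hdom _ hmeasP0 (fun v => ENNReal.toReal_nonneg) (fun v => htR1 _))) (fun v _ => ?_)
    refine mul_le_mul_of_nonneg_left (ENNReal.toReal_mono (measure_ne_top _ _)
      (measure_mono ?_)) (hKrnn v)
    intro ω hω
    exact ⟨lt_of_le_of_lt (by linarith) hω.1, hω.2⟩
  -- the function h
  set h : ℝ → ℝ := fun w => Ks (N w / D) with hhdef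
  have hgmem : ∀ w : ℝ, 0 ≤ w → N w / D ∈ Icc (0:ℝ) 1 :=
    fun w hw => ⟨div_nonneg (hNnn w) (le_of_lt hden), (div_le_one hden).mpr (hNleD w hw)⟩
  have hhmono : ∀ x ∈ Ioc (0:ℝ) 1, ∀ y ∈ Ioc (0:ℝ) 1, x ≤ y → h x ≤ h y := by
    intro x hx y hy hxy
    refine hKsdec (hgmem y (le_of_lt hy.1)) (hgmem x (le_of_lt hx.1)) ?_
    exact (div_le_div_iff_of_pos_right hden).mpr (hNanti hxy)
  have hKrss' : Krss = fun w => Kr w * h w := funext hKrss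
  -- rewrite interval integrals as set integrals
  rw [intervalIntegral.integral_of_le h01, intervalIntegral.integral_of_le h01,
    intervalIntegral.integral_of_le h01, intervalIntegral.integral_of_le h01]
  have hKrsspos' : 0 < ∫ w in Ioc (0:ℝ) 1, Krss w := by
    rwa [intervalIntegral.integral_of_le h01] at hKrsspos
  have hKrpos' : 0 < ∫ w in Ioc (0:ℝ) 1, Kr w := by
    rwa [intervalIntegral.integral_of_le h01] at hKrpos
  rw [div_le_div_iff₀ hKrsspos' hKrpos']
  -- integrabilities
  have hKrf : IntegrableOn (fun x => Kr x * f x) (Ioc 0 1) :=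
    hdom f (hfanti.measurable) hf0 hf1
  have hKrh : IntegrableOn (fun x => Kr x * h x) (Ioc 0 1) := by
    rw [← hKrss']; exact hKrssInt
  have hKrhf : IntegrableOn (fun x => Kr x * h x * f x) (Ioc 0 1) := by
    have hhmeas : Measurable h := by
      rw [hhdef]
      exact hKsmeas.comp ((hNanti.measurable).div_const D)
    refine Integrable.mono hKrh (((hKrmeas.mul hhmeas).mul (hfanti.measurable)).aestronglyMeasurable) ?_
    refine Filter.Eventually.of_forall (fun v => ?_)
    rw [Real.norm_eq_abs, Real.norm_eq_abs]
    have h1 : 0 ≤ Kr v * h v := mul_nonneg (hKrnn v) (hKsnn _)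
    rw [abs_of_nonneg (mul_nonneg h1 (hf0 v)), abs_of_nonneg h1]
    exact mul_le_of_le_one_right h1 (hf1 v)
  have hsign : ∀ x ∈ Ioc (0:ℝ) 1, ∀ y ∈ Ioc (0:ℝ) 1, (f x - f y) * (h x - h y) ≤ 0 := by
    intro x hx y hy
    rcases le_total x y with hxy | hyx
    · exact mul_nonpos_of_nonneg_of_nonpos (sub_nonneg.mpr (hfanti hxy))
        (sub_nonpos.mpr (hhmono x hx y hy hxy))
    · exact mul_nonpos_of_nonpos_of_nonneg (sub_nonpos.mpr (hfanti hyx))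
        (sub_nonneg.mpr (hhmono y hy x hx hyx))
  have key := chebyshev_integral_aux (Ioc 0 1) measurableSet_Ioc Kr f h
    hKrInt hKrf hKrh hKrhf hKrnn hsign
  simp only [hKrss']
  exact key
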